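/- arXiv:1412.5297 — 3 statements merged into one kernel-verified Lean document; each statement's English description precedes it below -/
import Mathlib

section
/- Let H₁,…,H_m be mutually unbiased regular Hadamard matrices of order 4n², B = B₁ − B₂ as above, and B₃ = I_{m+1} ⊗ J_{4n²} − I. Then B₁·B₃ = (2n²+n−1)B₁ + (2n²+n)B₂ and B₂·B₃ = (2n²−n)B₁ + (2n²−n−1)B₂. -/
open Matrix BigOperators

/-- A matrix has all entries ±1. -/
def signMatrix {α : Type*} (H : Matrix α α ℝ) : Prop :=
  ∀ p q, H p q = 1 ∨ H p q = -1

/-!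
Write `c = 2n`. The Gram matrix `M` has identity diagonal blocks, and every off-diagonal block
is `c⁻¹` times a ±1 matrix with all row sums `1` (the `Hᵢ/c` have unit row and column sums).
Hence `B = c(M − I)` vanishes on the diagonal blocks and is a ±1 matrix with row sums `c`
on each off-diagonal block. So `B₁ + B₂` is the indicator of the off-diagonal blocks, and a
row of an off-diagonal block of `B₁` (resp. `B₂`) contains `(4n² + c)/2` (resp. `(4n² − c)/2`)
ones. Right multiplication by `I ⊗ J − I` replaces an entry by its block row sum minus itself,
which yields both identities.
-/

lemma signMatrix.transpose {α : Type*} {L : Matrix α α ℝ} (hL : signMatrix L) :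
    signMatrix Lᵀ :=
  fun p q => hL q p

lemma add_eq_one_of_sub_eq_one_or_neg_one {R : Type*} [Ring R] {a b : R}
    (ha : a = 0 ∨ a = 1) (hb : b = 0 ∨ b = 1) (h : a - b = 1 ∨ a - b = -1) : a + b = 1 := by
  rcases ha with rfl | rfl <;> rcases hb with rfl | rfl <;> simp at h ⊢ <;>
    rcases h with h | h <;> simp [← h]

lemma sum_mul_transpose_apply_eq_one {α β γ R : Type*} [Fintype β] [Fintype γ] [CommSemiring R]
    {A : Matrix α β R} {B : Matrix γ β R} (hA : ∀ p, ∑ r, A p r = 1)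
    (hB : ∀ r, ∑ q, B q r = 1) (p : α) : ∑ q, (A * Bᵀ) p q = 1 := by
  simp only [mul_apply, transpose_apply]
  rw [Finset.sum_comm]
  simp only [← Finset.mul_sum, hB, mul_one, hA]

section BlockOnes

variable {ι κ R : Type*} [Fintype ι] [DecidableEq ι] [Fintype κ] [DecidableEq κ] [Ring R]

variable (ι κ R) in
/-- The matrix `I_ι ⊗ J_κ − I`. -/
def blockOnesSubOne : Matrix (ι × κ) (ι × κ) R :=
  of fun x y => (if x.1 = y.1 then 1 else 0) - if x = y then 1 else 0

lemma mul_blockOnesSubOne_apply (C : Matrix (ι × κ) (ι × κ) R) (x y : ι × κ) :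
    (C * blockOnesSubOne ι κ R) x y = ∑ q, C x (y.1, q) - C x y := by
  simp only [blockOnesSubOne, mul_apply, of_apply, mul_sub, mul_ite, mul_one, mul_zero,
    Finset.sum_sub_distrib, Fintype.sum_prod_type, Finset.sum_ite_eq', Finset.mem_univ, if_true]
  rw [Finset.sum_comm]
  simp only [Finset.sum_ite_eq', Finset.mem_univ, if_true]

lemma mul_blockOnesSubOne_eq {C D : Matrix (ι × κ) (ι × κ) R} {r : R}
    (hC : ∀ x y, x.1 = y.1 → C x y = 0) (hD : ∀ x y, x.1 = y.1 → D x y = 0)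
    (hCD : ∀ x y, x.1 ≠ y.1 → C x y + D x y = 1)
    (hr : ∀ x j, j ≠ x.1 → ∑ q, C x (j, q) = r) :
    C * blockOnesSubOne ι κ R = (r - 1) • C + r • D := by
  ext x y
  rw [mul_blockOnesSubOne_apply, Matrix.add_apply, Matrix.smul_apply, Matrix.smul_apply,
    smul_eq_mul, smul_eq_mul]
  by_cases hxy : x.1 = y.1
  · rw [← hxy, Finset.sum_eq_zero fun q _ => hC x (x.1, q) rfl, hC x y hxy, hD x y hxy]
    simp
  · rw [hr x y.1 (Ne.symm hxy), eq_sub_of_add_eq' (hCD x y hxy)]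
    noncomm_ring

end BlockOnes

lemma mul_blockOnesSubOne_of_parts {ι κ : Type*} [Fintype ι] [DecidableEq ι] [Fintype κ]
    [DecidableEq κ] {B₁ B₂ : Matrix (ι × κ) (ι × κ) ℝ} {s : ℝ}
    (h₁ : ∀ x y, B₁ x y = 0 ∨ B₁ x y = 1) (h₂ : ∀ x y, B₂ x y = 0 ∨ B₂ x y = 1)
    (hdisj : ∀ x y, B₁ x y = 0 ∨ B₂ x y = 0)
    (hdiag : ∀ i p q, (B₁ - B₂) (i, p) (i, q) = 0)
    (hoff : ∀ i j p q, i ≠ j → (B₁ - B₂) (i, p) (j, q) = 1 ∨ (B₁ - B₂) (i, p) (j, q) = -1)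
    (hsum : ∀ i p j, j ≠ i → ∑ q, (B₁ - B₂) (i, p) (j, q) = s) :
    B₁ * blockOnesSubOne ι κ ℝ =
        ((Fintype.card κ + s) / 2 - 1) • B₁ + ((Fintype.card κ + s) / 2) • B₂ ∧
      B₂ * blockOnesSubOne ι κ ℝ =
        ((Fintype.card κ - s) / 2) • B₁ + ((Fintype.card κ - s) / 2 - 1) • B₂ := by
  have hzero : ∀ x y, x.1 = y.1 → B₁ x y = 0 ∧ B₂ x y = 0 := by
    rintro ⟨i, p⟩ ⟨j, q⟩ (rfl : i = j)
    have h := sub_eq_zero.mp (hdiag i p q)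
    rcases hdisj (i, p) (i, q) with h0 | h0 <;> constructor <;> linarith
  have hone : ∀ x y, x.1 ≠ y.1 → B₁ x y + B₂ x y = 1 := by
    rintro ⟨i, p⟩ ⟨j, q⟩ hij
    exact add_eq_one_of_sub_eq_one_or_neg_one (h₁ _ _) (h₂ _ _) (hoff i j p q hij)
  have hrows : ∀ x j, j ≠ x.1 → ∑ q, B₁ x (j, q) = (Fintype.card κ + s) / 2 ∧
      ∑ q, B₂ x (j, q) = (Fintype.card κ - s) / 2 := by
    rintro ⟨i, p⟩ j hji
    have hadd : ∑ q, B₁ (i, p) (j, q) + ∑ q, B₂ (i, p) (j, q) = Fintype.card κ := by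
      rw [← Finset.sum_add_distrib, Finset.sum_congr rfl fun q _ => hone _ (j, q) hji.symm]
      simp
    have hsub := hsum i p j hji
    simp only [Matrix.sub_apply, Finset.sum_sub_distrib] at hsub
    constructor <;> linarith
  refine ⟨mul_blockOnesSubOne_eq (fun x y h => (hzero x y h).1) (fun x y h => (hzero x y h).2)
      hone fun x j h => (hrows x j h).1, ?_⟩
  rw [add_comm]
  exact mul_blockOnesSubOne_eq (fun x y h => (hzero x y h).2) (fun x y h => (hzero x y h).1)
    (fun x y h => by rw [add_comm]; exact hone x y h) fun x j h => (hrows x j h).2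

section Gram

variable {ι κ : Type*} [Fintype κ] [DecidableEq ι] [DecidableEq κ] {c : ℝ}
  {G : ι → Matrix κ κ ℝ} {M : Matrix (ι × κ) (ι × κ) ℝ}

lemma smul_gram_sub_one_apply_self (hM : ∀ i j p q, M (i, p) (j, q) = (G i * (G j)ᵀ) p q)
    (hself : ∀ i, G i * (G i)ᵀ = 1) (i : ι) (p q : κ) : (c • (M - 1)) (i, p) (i, q) = 0 := by
  simp [hM, hself, one_apply, Prod.ext_iff]

lemma smul_gram_sub_one_apply_of_ne (hc : c ≠ 0)
    (hM : ∀ i j p q, M (i, p) (j, q) = (G i * (G j)ᵀ) p q)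
    (hne : ∀ i j, i ≠ j → ∃ L, signMatrix L ∧ G i * (G j)ᵀ = c⁻¹ • L)
    {i j : ι} (hij : i ≠ j) (p q : κ) :
    (c • (M - 1)) (i, p) (j, q) = 1 ∨ (c • (M - 1)) (i, p) (j, q) = -1 := by
  obtain ⟨L, hL, hGL⟩ := hne i j hij
  have h1 : (1 : Matrix (ι × κ) (ι × κ) ℝ) (i, p) (j, q) = 0 := one_apply_ne (by simp [hij])
  simpa [hM, hGL, h1, hc] using hL p q

lemma sum_smul_gram_sub_one_apply (hM : ∀ i j p q, M (i, p) (j, q) = (G i * (G j)ᵀ) p q)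
    (hsum : ∀ i j p, ∑ q, (G i * (G j)ᵀ) p q = 1) {i j : ι} (hji : j ≠ i) (p : κ) :
    ∑ q, (c • (M - 1)) (i, p) (j, q) = c := by
  have h1 : ∀ q, (1 : Matrix (ι × κ) (ι × κ) ℝ) (i, p) (j, q) = 0 :=
    fun q => one_apply_ne (by simp [hji.symm])
  simp [h1, hM, ← Finset.mul_sum, hsum]

end Gram

section Blocks

variable {κ : Type*} [Fintype κ] [DecidableEq κ] {m : ℕ} {c : ℝ}
  {H : Fin m → Matrix κ κ ℝ} {G : Fin (m + 1) → Matrix κ κ ℝ}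

lemma sum_blocks_apply_eq_one (hc : c ≠ 0) (hG0 : G 0 = 1) (hGs : ∀ k, G k.succ = c⁻¹ • H k)
    (hrow : ∀ k p, ∑ q, H k p q = c) (i : Fin (m + 1)) (p : κ) : ∑ q, G i p q = 1 := by
  rcases Fin.eq_zero_or_eq_succ i with rfl | ⟨k, rfl⟩
  · simp [hG0, one_apply]
  · simp [hGs, ← Finset.mul_sum, hrow, hc]

lemma sum_blocks_mul_transpose_apply (hc : c ≠ 0) (hG0 : G 0 = 1)
    (hGs : ∀ k, G k.succ = c⁻¹ • H k) (hrow : ∀ k p, ∑ q, H k p q = c)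
    (hcol : ∀ k q, ∑ p, H k p q = c) (i j : Fin (m + 1)) (p : κ) :
    ∑ q, (G i * (G j)ᵀ) p q = 1 :=
  sum_mul_transpose_apply_eq_one (sum_blocks_apply_eq_one hc hG0 hGs hrow i)
    (sum_blocks_apply_eq_one (G := fun i => (G i)ᵀ) (H := fun k => (H k)ᵀ) hc
      (by simp [hG0]) (fun k => by simp [hGs]) (fun k q => hcol k q) j) p

lemma blocks_mul_transpose_self (hc : c ≠ 0) (hG0 : G 0 = 1) (hGs : ∀ k, G k.succ = c⁻¹ • H k)
    (hHad : ∀ k, H k * (H k)ᵀ = c ^ 2 • 1) (i : Fin (m + 1)) : G i * (G i)ᵀ = 1 := by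
  rcases Fin.eq_zero_or_eq_succ i with rfl | ⟨k, rfl⟩
  · simp [hG0]
  · rw [hGs, transpose_smul, Matrix.smul_mul, Matrix.mul_smul, hHad, smul_smul, smul_smul]
    field_simp
    simp

lemma blocks_mul_transpose_of_ne (hG0 : G 0 = 1) (hGs : ∀ k, G k.succ = c⁻¹ • H k)
    (hsign : ∀ k, signMatrix (H k))
    (hmub : ∀ k l, k ≠ l → ∃ L, signMatrix L ∧ H k * (H l)ᵀ = c • L)
    {i j : Fin (m + 1)} (hij : i ≠ j) : ∃ L, signMatrix L ∧ G i * (G j)ᵀ = c⁻¹ • L := by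
  rcases Fin.eq_zero_or_eq_succ i with rfl | ⟨k, rfl⟩ <;>
    rcases Fin.eq_zero_or_eq_succ j with rfl | ⟨l, rfl⟩
  · exact absurd rfl hij
  · exact ⟨(H l)ᵀ, (hsign l).transpose, by simp [hG0, hGs]⟩
  · exact ⟨H k, hsign k, by simp [hG0, hGs]⟩
  · obtain ⟨L, hL, hHL⟩ := hmub k l (hij <| congrArg Fin.succ ·)
    refine ⟨L, hL, ?_⟩
    rw [hGs, hGs, transpose_smul, Matrix.smul_mul, Matrix.mul_smul, hHL, smul_smul, smul_smul]
    field_simp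

end Blocks

theorem gram_B_times_B₃_general (n m : ℕ) (hn : 0 < n)
    (H : Fin m → Matrix (Fin (4*n^2)) (Fin (4*n^2)) ℝ)
    (hsign : ∀ k, signMatrix (H k))
    (hHad : ∀ k, H k * (H k)ᵀ = ((4 * n ^ 2 : ℕ) : ℝ) • 1)
    (hrow : ∀ k p, ∑ q, H k p q = 2 * (n : ℝ))
    (hcol : ∀ k q, ∑ p, H k p q = 2 * (n : ℝ))
    (hmub : ∀ k l, k ≠ l → ∃ L, signMatrix L ∧ H k * (H l)ᵀ = (2 * (n : ℝ)) • L)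
    (G : Fin (m+1) → Matrix (Fin (4*n^2)) (Fin (4*n^2)) ℝ)
    (hG0 : G 0 = 1)
    (hGs : ∀ k : Fin m, G k.succ = (2 * (n : ℝ))⁻¹ • H k)
    (M : Matrix (Fin (m+1) × Fin (4*n^2)) (Fin (m+1) × Fin (4*n^2)) ℝ)
    (hM : ∀ i j p q, M (i, p) (j, q) = (G i * (G j)ᵀ) p q)
    (B₁ B₂ B₃ : Matrix (Fin (m+1) × Fin (4*n^2)) (Fin (m+1) × Fin (4*n^2)) ℝ)
    (hB₁01 : ∀ x y, B₁ x y = 0 ∨ B₁ x y = 1)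
    (hB₂01 : ∀ x y, B₂ x y = 0 ∨ B₂ x y = 1)
    (hdisj : ∀ x y, B₁ x y = 0 ∨ B₂ x y = 0)
    (hB : B₁ - B₂ = (2 * (n : ℝ)) • (M - 1))
    (hB₃ : B₃ = Matrix.of (fun x y : Fin (m+1) × Fin (4*n^2) =>
      (if x.1 = y.1 then (1 : ℝ) else 0) - (if x = y then 1 else 0))) :
    B₁ * B₃ = (2 * (n : ℝ)^2 + n - 1) • B₁ + (2 * (n : ℝ)^2 + n) • B₂ ∧
    B₂ * B₃ = (2 * (n : ℝ)^2 - n) • B₁ + (2 * (n : ℝ)^2 - n - 1) • B₂ := by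
  have hc : 2 * (n : ℝ) ≠ 0 := by positivity
  have hHad' : ∀ k, H k * (H k)ᵀ = (2 * (n : ℝ)) ^ 2 • 1 := fun k => by
    rw [hHad k]; push_cast; ring_nf
  obtain ⟨h₁, h₂⟩ := mul_blockOnesSubOne_of_parts hB₁01 hB₂01 hdisj
    (fun i p q => by
      rw [hB]
      exact smul_gram_sub_one_apply_self hM (blocks_mul_transpose_self hc hG0 hGs hHad') i p q)
    (fun i j p q hij => by
      rw [hB]
      exact smul_gram_sub_one_apply_of_ne hc hM
        (fun _ _ => blocks_mul_transpose_of_ne hG0 hGs hsign hmub) hij p q)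
    (fun i p j hji => by
      rw [hB]
      exact sum_smul_gram_sub_one_apply hM
        (sum_blocks_mul_transpose_apply hc hG0 hGs hrow hcol) hji p)
  have hcard : ((Fintype.card (Fin (4 * n ^ 2)) : ℝ) + 2 * n) / 2 = 2 * (n : ℝ) ^ 2 + n ∧
      ((Fintype.card (Fin (4 * n ^ 2)) : ℝ) - 2 * n) / 2 = 2 * (n : ℝ) ^ 2 - n := by
    constructor <;> (simp only [Fintype.card_fin]; push_cast; ring)
  rw [hcard.1] at h₁
  rw [hcard.2] at h₂
  subst hB₃
  exact ⟨h₁, h₂⟩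

/-- For mutually unbiased regular Hadamard matrices of order `4n²`, with
`B₁, B₂` the positive and negative parts of `B = 2n(M−I)` and
`B₃ = I_{m+1} ⊗ J_{4n²} − I`, one has
`B₁·B₃ = (2n²+n−1)B₁ + (2n²+n)B₂` and `B₂·B₃ = (2n²−n)B₁ + (2n²−n−1)B₂`. -/
theorem gram_B_times_B₃ (n m : ℕ) (hn : 0 < n) (hm : 2 ≤ m)
    (H : Fin m → Matrix (Fin (4*n^2)) (Fin (4*n^2)) ℝ)
    (hsign : ∀ k, signMatrix (H k))
    (hHad : ∀ k, H k * (H k)ᵀ = ((4 * n ^ 2 : ℕ) : ℝ) • 1)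
    (hrow : ∀ k p, ∑ q, H k p q = 2 * (n : ℝ))
    (hcol : ∀ k q, ∑ p, H k p q = 2 * (n : ℝ))
    (hmub : ∀ k l, k ≠ l → ∃ L, signMatrix L ∧ H k * (H l)ᵀ = (2 * (n : ℝ)) • L)
    (G : Fin (m+1) → Matrix (Fin (4*n^2)) (Fin (4*n^2)) ℝ)
    (hG0 : G 0 = 1)
    (hGs : ∀ k : Fin m, G k.succ = (2 * (n : ℝ))⁻¹ • H k)
    (M : Matrix (Fin (m+1) × Fin (4*n^2)) (Fin (m+1) × Fin (4*n^2)) ℝ)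
    (hM : ∀ i j p q, M (i, p) (j, q) = (G i * (G j)ᵀ) p q)
    (B₁ B₂ B₃ : Matrix (Fin (m+1) × Fin (4*n^2)) (Fin (m+1) × Fin (4*n^2)) ℝ)
    (hB₁01 : ∀ x y, B₁ x y = 0 ∨ B₁ x y = 1)
    (hB₂01 : ∀ x y, B₂ x y = 0 ∨ B₂ x y = 1)
    (hdisj : ∀ x y, B₁ x y = 0 ∨ B₂ x y = 0)
    (hB : B₁ - B₂ = (2 * (n : ℝ)) • (M - 1))
    (hB₃ : B₃ = Matrix.of (fun x y : Fin (m+1) × Fin (4*n^2) =>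
      (if x.1 = y.1 then (1 : ℝ) else 0) - (if x = y then 1 else 0))) :
    B₁ * B₃ = (2 * (n : ℝ)^2 + n - 1) • B₁ + (2 * (n : ℝ)^2 + n) • B₂ ∧
    B₂ * B₃ = (2 * (n : ℝ)^2 - n) • B₁ + (2 * (n : ℝ)^2 - n - 1) • B₂ :=
  gram_B_times_B₃_general n m hn H hsign hHad hrow hcol hmub G hG0 hGs M hM B₁ B₂ B₃ hB₁01 hB₂01
    hdisj hB hB₃
end

section
/- In the 5-class scheme arising from mutually unbiased Bush-type Hadamard matrices of order 4n², A₁·A₄ = (n−1)A₄ + nA₅ and A₁·A₅ = nA₄ + (n−1)A₅. -/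
open Matrix BigOperators

/-- Bush-type condition: diagonal `2n`-blocks are all-ones, off-diagonal blocks
have zero row and column sums. -/
def isBushType (n : ℕ)
    (H : Matrix (Fin (2*n) × Fin (2*n)) (Fin (2*n) × Fin (2*n)) ℝ) : Prop :=
  (∀ i a b, H (i, a) (i, b) = 1) ∧
  (∀ i j, i ≠ j →
    (∀ a, ∑ b, H (i, a) (j, b) = 0) ∧ (∀ b, ∑ a, H (i, a) (j, b) = 0))

section BlockOnes

variable (α β : Type*) [DecidableEq α]

/-- `I ⊗ J`. -/
def blockOnes : Matrix (α × β) (α × β) ℝ :=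
  of fun p q => if p.1 = q.1 then 1 else 0

lemma blockOnes_transpose : (blockOnes α β)ᵀ = blockOnes α β := by
  ext p q
  simp [blockOnes, eq_comm]

variable {α β} [Fintype α] [Fintype β] {γ : Type*}

lemma blockOnes_mul_apply (X : Matrix (α × β) γ ℝ) (p : α × β) (r : γ) :
    (blockOnes α β * X) p r = ∑ c, X (p.1, c) r := by
  rw [mul_apply, Fintype.sum_prod_type,
    Finset.sum_eq_single p.1 (fun b _ hb => by simp [blockOnes, Ne.symm hb]) (by simp)]
  simp [blockOnes]

lemma mul_blockOnes_apply (X : Matrix γ (α × β) ℝ) (r : γ) (q : α × β) :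
    (X * blockOnes α β) r q = ∑ c, X r (q.1, c) := by
  rw [mul_apply, Fintype.sum_prod_type,
    Finset.sum_eq_single q.1 (fun b _ hb => by simp [blockOnes, hb]) (by simp)]
  simp [blockOnes]

end BlockOnes

namespace isBushType

variable {n : ℕ} {H : Matrix (Fin (2*n) × Fin (2*n)) (Fin (2*n) × Fin (2*n)) ℝ}

lemma mul_blockOnes (hH : isBushType n H) :
    H * blockOnes _ _ = (2 * (n : ℝ)) • blockOnes _ _ := by
  ext ⟨a, c⟩ ⟨b, d⟩
  rw [mul_blockOnes_apply, Matrix.smul_apply, smul_eq_mul, blockOnes, of_apply]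
  by_cases hab : a = b
  · subst hab
    simp [hH.1]
  · simp [hab, (hH.2 a b hab).1 c]

lemma blockOnes_mul (hH : isBushType n H) :
    blockOnes _ _ * H = (2 * (n : ℝ)) • blockOnes _ _ := by
  ext ⟨a, c⟩ ⟨b, d⟩
  rw [blockOnes_mul_apply, Matrix.smul_apply, smul_eq_mul, blockOnes, of_apply]
  by_cases hab : a = b
  · subst hab
    simp [hH.1]
  · simp [hab, (hH.2 a b hab).2 d]

end isBushType

section NormalizedFamily

variable {n m : ℕ} {H : Fin m → Matrix (Fin (2*n) × Fin (2*n)) (Fin (2*n) × Fin (2*n)) ℝ}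
  {G : Fin (m+1) → Matrix (Fin (2*n) × Fin (2*n)) (Fin (2*n) × Fin (2*n)) ℝ}

lemma gram_self (hn : 0 < n) (hHad : ∀ k, H k * (H k)ᵀ = ((4 * n ^ 2 : ℕ) : ℝ) • 1)
    (hG0 : G 0 = 1) (hGs : ∀ k : Fin m, G k.succ = (2 * (n : ℝ))⁻¹ • H k) (i : Fin (m+1)) :
    G i * (G i)ᵀ = 1 := by
  cases i using Fin.cases with
  | zero => simp [hG0]
  | succ k =>
    have hn' : (n : ℝ) ≠ 0 := by positivity
    have hscale : (2 * (n : ℝ))⁻¹ * (2 * (n : ℝ))⁻¹ * ((4 * n ^ 2 : ℕ) : ℝ) = 1 := by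
      push_cast
      field_simp
      ring
    rw [hGs, transpose_smul, Matrix.smul_mul, Matrix.mul_smul, hHad, smul_smul, smul_smul, hscale,
      one_smul]

lemma blockOnes_mul_gram (hn : 0 < n) (hBush : ∀ k, isBushType n (H k))
    (hG0 : G 0 = 1) (hGs : ∀ k : Fin m, G k.succ = (2 * (n : ℝ))⁻¹ • H k) (i j : Fin (m+1)) :
    blockOnes _ _ * (G i * (G j)ᵀ) = blockOnes _ _ := by
  have h2n : (2 * (n : ℝ)) ≠ 0 := by positivity
  have hG : ∀ i, G i * blockOnes _ _ = blockOnes _ _ ∧ blockOnes _ _ * G i = blockOnes _ _ := by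
    intro i
    cases i using Fin.cases with
    | zero => simp [hG0]
    | succ k =>
      rw [hGs, Matrix.smul_mul, Matrix.mul_smul, (hBush k).mul_blockOnes,
        (hBush k).blockOnes_mul, smul_smul, inv_mul_cancel₀ h2n, one_smul]
      exact ⟨rfl, rfl⟩
  calc blockOnes _ _ * (G i * (G j)ᵀ) = (G j * (blockOnes _ _)ᵀ)ᵀ := by
        rw [← Matrix.mul_assoc, (hG i).2, transpose_mul, transpose_transpose]
    _ = blockOnes _ _ := by rw [blockOnes_transpose, (hG j).1, blockOnes_transpose]

lemma signMatrix_smul_gram (hn : 0 < n) (hsign : ∀ k, signMatrix (H k))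
    (hmub : ∀ k l, k ≠ l → ∃ L, signMatrix L ∧ H k * (H l)ᵀ = (2 * (n : ℝ)) • L)
    (hG0 : G 0 = 1) (hGs : ∀ k : Fin m, G k.succ = (2 * (n : ℝ))⁻¹ • H k)
    {i j : Fin (m+1)} (hij : i ≠ j) :
    signMatrix ((2 * (n : ℝ)) • (G i * (G j)ᵀ)) := by
  have h2n : (2 * (n : ℝ)) ≠ 0 := by positivity
  cases i using Fin.cases with
  | zero =>
    cases j using Fin.cases with
    | zero => exact absurd rfl hij
    | succ l =>
      rw [hG0, hGs, one_mul, transpose_smul, smul_smul, mul_inv_cancel₀ h2n, one_smul]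
      exact fun p q => hsign l q p
  | succ k =>
    rw [hGs, Matrix.smul_mul, smul_smul, mul_inv_cancel₀ h2n, one_smul]
    cases j using Fin.cases with
    | zero =>
      rw [hG0, transpose_one, mul_one]
      exact hsign k
    | succ l =>
      obtain ⟨L, hL, hHL⟩ := hmub k l (fun h => hij (by rw [h]))
      rwa [hGs, transpose_smul, Matrix.mul_smul, hHL, smul_smul, inv_mul_cancel₀ h2n, one_smul]

end NormalizedFamily

section IsCellConstant

variable {ι α β γ : Type*}

def IsCellConstant (X : Matrix (ι × α × β) γ ℝ) : Prop :=
  ∀ i a c c' y, X (i, a, c) y = X (i, a, c') y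

lemma IsCellConstant.sub {X Y : Matrix (ι × α × β) γ ℝ} (hX : IsCellConstant X)
    (hY : IsCellConstant Y) : IsCellConstant (X - Y) := by
  intro i a c c' y
  simp only [Matrix.sub_apply, hX i a c c' y, hY i a c c' y]

end IsCellConstant

section CellOnes

variable (ι α β : Type*) [DecidableEq ι] [DecidableEq α]

/-- `I ⊗ I ⊗ J`, i.e. `A₁ + I` in the scheme. -/
def cellOnes : Matrix (ι × α × β) (ι × α × β) ℝ :=
  of fun x y => if x.1 = y.1 ∧ x.2.1 = y.2.1 then 1 else 0

lemma cellOnes_sub_one [DecidableEq β] :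
    cellOnes ι α β - 1 = of fun x y : ι × α × β =>
      if x.1 = y.1 ∧ x.2.1 = y.2.1 ∧ x.2.2 ≠ y.2.2 then (1 : ℝ) else 0 := by
  ext ⟨i, a, c⟩ ⟨j, b, d⟩
  by_cases hij : i = j <;> by_cases hab : a = b <;> by_cases hcd : c = d <;>
    simp [cellOnes, one_apply, hij, hab, hcd]

variable {ι α β} [Fintype ι] [Fintype α] [Fintype β] {γ : Type*}

lemma cellOnes_mul_apply (X : Matrix (ι × α × β) γ ℝ) (i : ι) (a : α) (c : β) (y : γ) :
    (cellOnes ι α β * X) (i, a, c) y = ∑ c', X (i, a, c') y := by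
  rw [mul_apply, Fintype.sum_prod_type,
    Finset.sum_eq_single i (fun j _ hj => by simp [cellOnes, Ne.symm hj]) (by simp),
    Fintype.sum_prod_type,
    Finset.sum_eq_single a (fun b _ hb => by simp [cellOnes, Ne.symm hb]) (by simp)]
  simp [cellOnes]

lemma IsCellConstant.cellOnes_mul {X : Matrix (ι × α × β) γ ℝ} (hX : IsCellConstant X) :
    cellOnes ι α β * X = (Fintype.card β : ℝ) • X := by
  ext ⟨i, a, c⟩ y
  rw [cellOnes_mul_apply, Finset.sum_congr rfl (fun c' _ => hX i a c' c y)]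
  simp

end CellOnes

section GramBlocks

variable {ι : Type*} [DecidableEq ι]

lemma sub_one_apply_of_gram {κ : Type*} [Fintype κ] [DecidableEq κ]
    {M : Matrix (ι × κ) (ι × κ) ℝ} {G : ι → Matrix κ κ ℝ}
    (hM : ∀ i j p q, M (i, p) (j, q) = (G i * (G j)ᵀ) p q)
    (hGG : ∀ i, G i * (G i)ᵀ = 1) (i j : ι) (p q : κ) :
    (M - 1) (i, p) (j, q) = if i = j then 0 else (G i * (G j)ᵀ) p q := by
  rw [Matrix.sub_apply, hM]
  by_cases hij : i = j
  · subst hij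
    simp [hGG, one_apply]
  · simp [hij, one_apply]

variable {α β : Type*} [Fintype α] [Fintype β] [DecidableEq α] [DecidableEq β]
  {M : Matrix (ι × α × β) (ι × α × β) ℝ} {G : ι → Matrix (α × β) (α × β) ℝ}

lemma isCellConstant_hadamard_self_of_gram
    (hM : ∀ i j p q, M (i, p) (j, q) = (G i * (G j)ᵀ) p q) (hGG : ∀ i, G i * (G i)ᵀ = 1) (s : ℝ)
    (hsign : ∀ i j, i ≠ j → signMatrix (s • (G i * (G j)ᵀ))) :
    IsCellConstant ((s • (M - 1)) ⊙ (s • (M - 1))) := by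
  have hsq : ∀ i j p q,
      ((s • (M - 1)) ⊙ (s • (M - 1))) (i, p) (j, q) = if i = j then 0 else 1 := by
    intro i j p q
    rw [hadamard_apply, Matrix.smul_apply, sub_one_apply_of_gram hM hGG]
    split_ifs with hij
    · simp
    · rcases hsign i j hij p q with h | h <;>
        rw [Matrix.smul_apply, smul_eq_mul] at h <;> rw [smul_eq_mul, h] <;> norm_num
  intro i a c c' y
  rw [hsq, hsq]

lemma cellOnes_mul_sub_one_of_gram [Fintype ι]
    (hM : ∀ i j p q, M (i, p) (j, q) = (G i * (G j)ᵀ) p q) (hGG : ∀ i, G i * (G i)ᵀ = 1)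
    (hEG : ∀ i j, blockOnes α β * (G i * (G j)ᵀ) = blockOnes α β) :
    cellOnes ι α β * (M - 1) = of fun x y : ι × α × β =>
      if x.1 ≠ y.1 ∧ x.2.1 = y.2.1 then (1 : ℝ) else 0 := by
  ext ⟨i, a, c⟩ ⟨j, b, d⟩
  rw [cellOnes_mul_apply]
  simp_rw [sub_one_apply_of_gram hM hGG]
  by_cases hij : i = j
  · simp [hij]
  · simp only [hij, if_false]
    rw [← blockOnes_mul_apply (p := (a, c)), hEG]
    simp [blockOnes, hij]

end GramBlocks

lemma add_eq_hadamard_sub_self {κ₁ κ₂ : Type*} {B₁ B₂ : Matrix κ₁ κ₂ ℝ}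
    (hB₁01 : ∀ x y, B₁ x y = 0 ∨ B₁ x y = 1) (hB₂01 : ∀ x y, B₂ x y = 0 ∨ B₂ x y = 1)
    (hdisj : ∀ x y, B₁ x y = 0 ∨ B₂ x y = 0) :
    B₁ + B₂ = (B₁ - B₂) ⊙ (B₁ - B₂) := by
  ext x y
  simp only [Matrix.add_apply, hadamard_apply, Matrix.sub_apply]
  rcases hB₁01 x y with h₁ | h₁ <;> rcases hB₂01 x y with h₂ | h₂ <;>
    rcases hdisj x y with h | h <;> simp_all

lemma sub_one_mul_of_mul_add_of_mul_sub {κ : Type*} [Fintype κ] [DecidableEq κ]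
    {E A B : Matrix κ κ ℝ} {c : ℝ}
    (hadd : E * (A + B) = (2 * c) • (A + B)) (hsub : E * (A - B) = 0) :
    (E - 1) * A = (c - 1) • A + c • B ∧ (E - 1) * B = c • A + (c - 1) • B := by
  constructor <;> ext x y <;>
  · have h₁ := congrFun₂ hadd x y
    have h₂ := congrFun₂ hsub x y
    simp only [mul_add, mul_sub, Matrix.add_apply, Matrix.sub_apply, Matrix.smul_apply, smul_eq_mul,
      Matrix.zero_apply] at h₁ h₂
    simp only [sub_mul, one_mul, Matrix.add_apply, Matrix.sub_apply, Matrix.smul_apply, smul_eq_mul]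
    linarith

theorem mubh_A1_times_A4_A5_general (n m : ℕ) (hn : 0 < n)
    (H : Fin m → Matrix (Fin (2*n) × Fin (2*n)) (Fin (2*n) × Fin (2*n)) ℝ)
    (hsign : ∀ k, signMatrix (H k))
    (hHad : ∀ k, H k * (H k)ᵀ = ((4 * n ^ 2 : ℕ) : ℝ) • 1)
    (hBush : ∀ k, isBushType n (H k))
    (hmub : ∀ k l, k ≠ l → ∃ L, signMatrix L ∧ H k * (H l)ᵀ = (2 * (n : ℝ)) • L)
    (G : Fin (m+1) → Matrix (Fin (2*n) × Fin (2*n)) (Fin (2*n) × Fin (2*n)) ℝ)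
    (hG0 : G 0 = 1)
    (hGs : ∀ k : Fin m, G k.succ = (2 * (n : ℝ))⁻¹ • H k)
    (M : Matrix (Fin (m+1) × Fin (2*n) × Fin (2*n)) (Fin (m+1) × Fin (2*n) × Fin (2*n)) ℝ)
    (hM : ∀ i j p q, M (i, p) (j, q) = (G i * (G j)ᵀ) p q)
    (B₁ B₂ : Matrix (Fin (m+1) × Fin (2*n) × Fin (2*n)) (Fin (m+1) × Fin (2*n) × Fin (2*n)) ℝ)
    (hB₁01 : ∀ x y, B₁ x y = 0 ∨ B₁ x y = 1)
    (hB₂01 : ∀ x y, B₂ x y = 0 ∨ B₂ x y = 1)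
    (hdisj : ∀ x y, B₁ x y = 0 ∨ B₂ x y = 0)
    (hB : B₁ - B₂ = (2 * (n : ℝ)) • (M - 1))
    (A₁ A₃ A₄ A₅ : Matrix (Fin (m+1) × Fin (2*n) × Fin (2*n)) (Fin (m+1) × Fin (2*n) × Fin (2*n)) ℝ)
    (hA₁ : A₁ = Matrix.of (fun x y : Fin (m+1) × Fin (2*n) × Fin (2*n) =>
      if x.1 = y.1 ∧ x.2.1 = y.2.1 ∧ x.2.2 ≠ y.2.2 then (1 : ℝ) else 0))
    (hA₃ : A₃ = Matrix.of (fun x y : Fin (m+1) × Fin (2*n) × Fin (2*n) =>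
      if x.1 ≠ y.1 ∧ x.2.1 = y.2.1 then (1 : ℝ) else 0))
    (hA₄ : A₄ = B₁ - A₃)
    (hA₅ : A₅ = B₂)
    :
    A₁ * A₄ = ((n : ℝ) - 1) • A₄ + (n : ℝ) • A₅ ∧
    A₁ * A₅ = (n : ℝ) • A₄ + ((n : ℝ) - 1) • A₅ := by
  have hGG := gram_self hn hHad hG0 hGs
  have hcard : (Fintype.card (Fin (2*n)) : ℝ) = 2 * n := by simp
  have hA₃c : IsCellConstant A₃ := by
    subst hA₃
    intro i a c c' y
    rfl
  have hB₁₂ : IsCellConstant (B₁ + B₂) := by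
    rw [add_eq_hadamard_sub_self hB₁01 hB₂01 hdisj, hB]
    exact isCellConstant_hadamard_self_of_gram hM hGG _
      (fun i j hij => signMatrix_smul_gram hn hsign hmub hG0 hGs hij)
  have hadd : cellOnes _ _ _ * (A₄ + A₅) = (2 * (n : ℝ)) • (A₄ + A₅) := by
    rw [hA₄, hA₅, sub_add_eq_add_sub, (hB₁₂.sub hA₃c).cellOnes_mul, hcard]
  have hsub : cellOnes _ _ _ * (A₄ - A₅) = 0 := by
    rw [hA₄, hA₅, sub_right_comm, hB, mul_sub, Matrix.mul_smul,
      cellOnes_mul_sub_one_of_gram hM hGG (blockOnes_mul_gram hn hBush hG0 hGs), ← hA₃,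
      hA₃c.cellOnes_mul, hcard, sub_self]
  rw [hA₁, ← cellOnes_sub_one]
  exact sub_one_mul_of_mul_add_of_mul_sub hadd hsub

/-- In the 5-class scheme arising from mutually unbiased Bush-type Hadamard
matrices of order `4n²`, `A₁·A₄ = (n−1)A₄ + nA₅` and `A₁·A₅ = nA₄ + (n−1)A₅`. -/
theorem mubh_A1_times_A4_A5 (n m : ℕ) (hn : 0 < n)
    (H : Fin m → Matrix (Fin (2*n) × Fin (2*n)) (Fin (2*n) × Fin (2*n)) ℝ)
    (hsign : ∀ k, signMatrix (H k))
    (hHad : ∀ k, H k * (H k)ᵀ = ((4 * n ^ 2 : ℕ) : ℝ) • 1)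
    (hBush : ∀ k, isBushType n (H k))
    (hmub : ∀ k l, k ≠ l → ∃ L, signMatrix L ∧ H k * (H l)ᵀ = (2 * (n : ℝ)) • L)
    (G : Fin (m+1) → Matrix (Fin (2*n) × Fin (2*n)) (Fin (2*n) × Fin (2*n)) ℝ)
    (hG0 : G 0 = 1)
    (hGs : ∀ k : Fin m, G k.succ = (2 * (n : ℝ))⁻¹ • H k)
    (M : Matrix (Fin (m+1) × Fin (2*n) × Fin (2*n)) (Fin (m+1) × Fin (2*n) × Fin (2*n)) ℝ)
    (hM : ∀ i j p q, M (i, p) (j, q) = (G i * (G j)ᵀ) p q)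
    (B₁ B₂ : Matrix (Fin (m+1) × Fin (2*n) × Fin (2*n)) (Fin (m+1) × Fin (2*n) × Fin (2*n)) ℝ)
    (hB₁01 : ∀ x y, B₁ x y = 0 ∨ B₁ x y = 1)
    (hB₂01 : ∀ x y, B₂ x y = 0 ∨ B₂ x y = 1)
    (hdisj : ∀ x y, B₁ x y = 0 ∨ B₂ x y = 0)
    (hB : B₁ - B₂ = (2 * (n : ℝ)) • (M - 1))
    (A₀ A₁ A₂ A₃ A₄ A₅ : Matrix (Fin (m+1) × Fin (2*n) × Fin (2*n)) (Fin (m+1) × Fin (2*n) × Fin (2*n)) ℝ)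
    (hA₀ : A₀ = 1)
    (hA₁ : A₁ = Matrix.of (fun x y : Fin (m+1) × Fin (2*n) × Fin (2*n) =>
      if x.1 = y.1 ∧ x.2.1 = y.2.1 ∧ x.2.2 ≠ y.2.2 then (1 : ℝ) else 0))
    (hA₂ : A₂ = Matrix.of (fun x y : Fin (m+1) × Fin (2*n) × Fin (2*n) =>
      if x.1 = y.1 ∧ x.2.1 ≠ y.2.1 then (1 : ℝ) else 0))
    (hA₃ : A₃ = Matrix.of (fun x y : Fin (m+1) × Fin (2*n) × Fin (2*n) =>
      if x.1 ≠ y.1 ∧ x.2.1 = y.2.1 then (1 : ℝ) else 0))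
    (hA₄ : A₄ = B₁ - A₃)
    (hA₅ : A₅ = B₂)
    :
    A₁ * A₄ = ((n : ℝ) - 1) • A₄ + (n : ℝ) • A₅ ∧
    A₁ * A₅ = (n : ℝ) • A₄ + ((n : ℝ) - 1) • A₅ :=
  mubh_A1_times_A4_A5_general n m hn H hsign hHad hBush hmub G hG0 hGs M hM B₁ B₂ hB₁01 hB₂01 hdisj
    hB A₁ A₃ A₄ A₅ hA₁ hA₃ hA₄ hA₅
end

section
/- If there exist m mutually suitable Latin squares of order 2n all having constant value 1 on the diagonal, and a Hadamard matrix of order 2n, then there exist m mutually unbiased Bush-type Hadamard matrices of order 4n². -/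
/-! Multiplying the columns of `K` by the entries of row `d` keeps `K` Hadamard and makes row `d`
all ones, so every other row sums to zero. Replace the symbol `s` of a Latin square `L` by the
rank-one block `r_sᵀ r_s` of the normalized rows to get `H_L`. The `((i, a), (j, b))` entry of
`H_L H_Mᵀ` is `∑_c r_{L i c}(a) r_{M j c}(b) ⟪r_{L i c}, r_{M j c}⟫`, and row orthogonality keeps
only the columns `c` with `L i c = M j c`. For `M = L` these are all columns if `i = j` and none
otherwise, so column orthogonality gives `H_L H_Lᵀ = 4n² I`; for suitable `L, M` there is exactly
one such column, so every entry is `±2n`. The constant diagonal `d` of `L` puts the all-ones row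
into the diagonal blocks and zero-sum rows into all others. -/

open Matrix BigOperators

lemma mul_eq_one_or_neg_one {a b : ℝ} (ha : a = 1 ∨ a = -1) (hb : b = 1 ∨ b = -1) :
    a * b = 1 ∨ a * b = -1 := by
  rcases ha with rfl | rfl <;> rcases hb with rfl | rfl <;> norm_num

lemma signMatrix.mul_self_apply {α : Type*} {K : Matrix α α ℝ} (hK : signMatrix K) (p q : α) :
    K p q * K p q = 1 := by
  rcases hK p q with h | h <;> simp [h]

lemma transpose_mul_self_eq_smul_one {ι 𝕜 : Type*} [Fintype ι] [DecidableEq ι] [Field 𝕜]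
    {K : Matrix ι ι 𝕜} {c : 𝕜} (hc : c ≠ 0) (h : K * Kᵀ = c • 1) : Kᵀ * K = c • 1 := by
  have hinv : (c⁻¹ • Kᵀ) * K = 1 :=
    mul_eq_one_comm.mp (by rw [Matrix.mul_smul, h, smul_smul, inv_mul_cancel₀ hc, one_smul])
  rw [← hinv, Matrix.smul_mul, smul_smul, mul_inv_cancel₀ hc, one_smul]

section

variable {ι : Type*} {K : Matrix ι ι ℝ}

def latinBlockMatrix (L : ι → ι → ι) (K : Matrix ι ι ℝ) : Matrix (ι × ι) (ι × ι) ℝ :=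
  of fun p q => K (L p.1 q.1) p.2 * K (L p.1 q.1) q.2

lemma signMatrix.latinBlockMatrix (hK : signMatrix K) (L : ι → ι → ι) :
    signMatrix (latinBlockMatrix L K) :=
  fun _ _ => mul_eq_one_or_neg_one (hK _ _) (hK _ _)

variable [Fintype ι]

lemma latinBlockMatrix_mul_transpose_apply (L M : ι → ι → ι) (i a j b : ι) :
    (latinBlockMatrix L K * (latinBlockMatrix M K)ᵀ) (i, a) (j, b) =
      ∑ x, K (L i x) a * K (M j x) b * (K * Kᵀ) (L i x) (M j x) := by
  simp only [mul_apply, Fintype.sum_prod_type, Finset.mul_sum, transpose_apply,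
    latinBlockMatrix, of_apply]
  exact Finset.sum_congr rfl fun _ _ => Finset.sum_congr rfl fun _ _ => by ring

variable [DecidableEq ι]

lemma latinBlockMatrix_mul_transpose_apply_of_rows {c : ℝ} (hrows : K * Kᵀ = c • 1)
    (L M : ι → ι → ι) (i a j b : ι) :
    (latinBlockMatrix L K * (latinBlockMatrix M K)ᵀ) (i, a) (j, b) =
      ∑ x, if L i x = M j x then c * (K (L i x) a * K (M j x) b) else 0 := by
  rw [latinBlockMatrix_mul_transpose_apply, hrows]
  refine Finset.sum_congr rfl fun x _ => ?_
  split_ifs with h <;> simp [h, mul_comm]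

lemma latinBlockMatrix_mul_transpose_self {c : ℝ} (hrows : K * Kᵀ = c • 1)
    (hcols : Kᵀ * K = c • 1) {L : ι → ι → ι} (hrow : ∀ i, Function.Bijective (L i))
    (hcol : ∀ j, Function.Injective (L · j)) :
    latinBlockMatrix L K * (latinBlockMatrix L K)ᵀ = (c * c) • 1 := by
  ext ⟨i, a⟩ ⟨j, b⟩
  rw [latinBlockMatrix_mul_transpose_apply_of_rows hrows]
  by_cases hij : i = j
  · subst hij
    have horth : ∑ s, K s a * K s b = (c • 1 : Matrix ι ι ℝ) a b := by
      rw [← hcols]; simp [mul_apply]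
    simp only [if_true, ← Finset.mul_sum, (hrow i).sum_comp (fun s => K s a * K s b), horth]
    simp [one_apply]
  · have hne : ∀ x, L i x ≠ L j x := fun x h => hij (hcol x h)
    simp [hne, one_apply, hij]

lemma exists_signMatrix_latinBlockMatrix_mul_transpose {c : ℝ} (hK : signMatrix K)
    (hrows : K * Kᵀ = c • 1) {L M : ι → ι → ι} (hsuit : ∀ r s, ∃! x, L r x = M s x) :
    ∃ S, signMatrix S ∧ latinBlockMatrix L K * (latinBlockMatrix M K)ᵀ = c • S := by
  choose x hx hxuniq using hsuit
  refine ⟨of fun p q => K (L p.1 (x p.1 q.1)) p.2 * K (M q.1 (x p.1 q.1)) q.2,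
    fun _ _ => mul_eq_one_or_neg_one (hK _ _) (hK _ _), ?_⟩
  ext ⟨i, a⟩ ⟨j, b⟩
  rw [latinBlockMatrix_mul_transpose_apply_of_rows hrows, Finset.sum_eq_single (x i j)]
  · simp [hx i j]
  · intro y _ hy
    rw [if_neg fun h => hy (hxuniq i j y h)]
  · simp

def rowNormalize (K : Matrix ι ι ℝ) (d : ι) : Matrix ι ι ℝ :=
  K * diagonal (K d)

lemma rowNormalize_apply (d p q : ι) :
    rowNormalize K d p q = K p q * K d q :=
  mul_diagonal _ _ _ _

lemma signMatrix.diagonal_mul_self (hK : signMatrix K) (d : ι) :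
    diagonal (K d) * diagonal (K d) = 1 := by
  rw [diagonal_mul_diagonal, ← diagonal_one]
  exact congrArg diagonal (funext (hK.mul_self_apply d))

lemma signMatrix.rowNormalize (hK : signMatrix K) (d : ι) : signMatrix (rowNormalize K d) :=
  fun p q => by rw [rowNormalize_apply]; exact mul_eq_one_or_neg_one (hK p q) (hK d q)

lemma rowNormalize_apply_self (hK : signMatrix K) (d q : ι) : rowNormalize K d d q = 1 := by
  rw [rowNormalize_apply, hK.mul_self_apply]

lemma rowNormalize_mul_transpose (hK : signMatrix K) (d : ι) :
    rowNormalize K d * (rowNormalize K d)ᵀ = K * Kᵀ := by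
  rw [rowNormalize, transpose_mul, diagonal_transpose, Matrix.mul_assoc,
    ← Matrix.mul_assoc (diagonal _), hK.diagonal_mul_self, Matrix.one_mul]

lemma transpose_rowNormalize_mul {c : ℝ} (hK : signMatrix K) (hcols : Kᵀ * K = c • 1) (d : ι) :
    (rowNormalize K d)ᵀ * rowNormalize K d = c • 1 := by
  rw [rowNormalize, transpose_mul, diagonal_transpose, Matrix.mul_assoc,
    ← Matrix.mul_assoc Kᵀ, hcols, Matrix.smul_mul, Matrix.one_mul, Matrix.mul_smul,
    hK.diagonal_mul_self]

lemma sum_rowNormalize_apply_eq_zero {c : ℝ} (hrows : K * Kᵀ = c • 1) {d p : ι} (hp : p ≠ d) :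
    ∑ q, rowNormalize K d p q = 0 := by
  have h := congrFun (congrFun hrows p) d
  simp only [mul_apply, transpose_apply, Matrix.smul_apply, one_apply_ne hp, smul_zero] at h
  simpa only [rowNormalize_apply] using h

end

lemma isBushType_latinBlockMatrix {n : ℕ} {K : Matrix (Fin (2*n)) (Fin (2*n)) ℝ} {d : Fin (2*n)}
    (hd : ∀ q, K d q = 1) (hsum : ∀ p ≠ d, ∑ q, K p q = 0) {L : Fin (2*n) → Fin (2*n) → Fin (2*n)}
    (hrow : ∀ i, Function.Injective (L i)) (hdiag : ∀ i, L i i = d) :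
    isBushType n (latinBlockMatrix L K) := by
  refine ⟨fun i a b => by simp [latinBlockMatrix, hdiag, hd], fun i j hij => ?_⟩
  have hne : L i j ≠ d := fun h => hij (hrow i (by rw [h, hdiag]))
  exact ⟨fun a => by simp [latinBlockMatrix, ← Finset.mul_sum, hsum _ hne],
    fun b => by simp [latinBlockMatrix, ← Finset.sum_mul, hsum _ hne]⟩

/-- If there are `m` mutually suitable Latin squares of order `2n` with constant
diagonal and a Hadamard matrix of order `2n`, then there are `m` mutually
unbiased Bush-type Hadamard matrices of order `4n²`. -/
theorem msls_gives_mubh (n m : ℕ) (hn : 0 < n)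
    (L : Fin m → Fin (2*n) → Fin (2*n) → Fin (2*n))
    (hLrow : ∀ k i, Function.Bijective (L k i))
    (hLcol : ∀ k j, Function.Bijective (fun i => L k i j))
    (hsuit : ∀ k l, k ≠ l → ∀ r s, ∃! c, L k r c = L l s c)
    (d : Fin (2*n)) (hdiag : ∀ k i, L k i i = d)
    (K : Matrix (Fin (2*n)) (Fin (2*n)) ℝ)
    (hKsign : signMatrix K)
    (hKHad : K * Kᵀ = ((2 * n : ℕ) : ℝ) • 1) :
    ∃ H : Fin m → Matrix (Fin (2*n) × Fin (2*n)) (Fin (2*n) × Fin (2*n)) ℝ,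
      (∀ k, signMatrix (H k) ∧ H k * (H k)ᵀ = ((4 * n ^ 2 : ℕ) : ℝ) • 1 ∧
        isBushType n (H k)) ∧
      (∀ k l, k ≠ l →
        ∃ Lkl, signMatrix Lkl ∧ H k * (H l)ᵀ = (2 * (n : ℝ)) • Lkl) := by
  have hc : ((2 * n : ℕ) : ℝ) ≠ 0 := by positivity
  set K₀ := rowNormalize K d
  have hrows : K₀ * K₀ᵀ = ((2 * n : ℕ) : ℝ) • 1 :=
    (rowNormalize_mul_transpose hKsign d).trans hKHad
  have hcols : K₀ᵀ * K₀ = ((2 * n : ℕ) : ℝ) • 1 :=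
    transpose_rowNormalize_mul hKsign (transpose_mul_self_eq_smul_one hc hKHad) d
  refine ⟨fun k => latinBlockMatrix (L k) K₀,
    fun k => ⟨(hKsign.rowNormalize d).latinBlockMatrix _, ?_, ?_⟩, fun k l hkl => ?_⟩
  · rw [latinBlockMatrix_mul_transpose_self hrows hcols (hLrow k) fun j => (hLcol k j).injective]
    congr 1
    push_cast
    ring
  · exact isBushType_latinBlockMatrix (rowNormalize_apply_self hKsign d)
      (fun p hp => sum_rowNormalize_apply_eq_zero hKHad hp) (fun i => (hLrow k i).injective)
      (hdiag k)
  · simpa using exists_signMatrix_latinBlockMatrix_mul_transpose (hKsign.rowNormalize d) hrows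
      (hsuit k l hkl)
end
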